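/- Define k_sym(ξ₁,ξ₂) = (1/2)(ξ₁+ξ₂)⁴·csch²(ξ₁+ξ₂) − (1/2)(ξ₁+ξ₂)·ξ₁³·csch²(ξ₁) − (1/2)(ξ₁+ξ₂)·ξ₂³·csch²(ξ₂), where csch(x) = 1/sinh(x), and write ⟨ξ⟩ = √(1+ξ²). Then there exist constants C > 0 and ε ∈ (0,1) such that: (i) for all real ξ₁, ξ₂ with 0 < |ξ₁| ≤ ε|ξ₂|, one has |k_sym(ξ₁,ξ₂)| ≤ C·|ξ₁|·|ξ₂|³/⟨ξ₂⟩²; and (ii) for all real ξ₁, ξ₂ with ξ₁ ≠ 0, ξ₂ ≠ 0, ξ₁+ξ₂ ≠ 0 and |ξ₁+ξ₂| ≤ ε|ξ₂|, one has |k_sym(ξ₁,ξ₂)| ≤ C·(ξ₁+ξ₂)²·ξ₂²/⟨ξ₂⟩². -/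

import Mathlib

/-- Hyperbolic cosecant. -/
noncomputable def csch (x : ℝ) : ℝ := 1 / Real.sinh x

/-- Japanese bracket `⟨ξ⟩ = √(1+ξ²)`. -/
noncomputable def jb (ξ : ℝ) : ℝ := Real.sqrt (1 + ξ ^ 2)

/-- Symmetrized commutator symbol of the normal form construction. -/
noncomputable def ksym (ξ₁ ξ₂ : ℝ) : ℝ :=
  (1 / 2) * (ξ₁ + ξ₂) ^ 4 * csch (ξ₁ + ξ₂) ^ 2
    - (1 / 2) * (ξ₁ + ξ₂) * ξ₁ ^ 3 * csch ξ₁ ^ 2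
    - (1 / 2) * (ξ₁ + ξ₂) * ξ₂ ^ 3 * csch ξ₂ ^ 2

open Real Finset

/- ### Taylor-type estimates for `sinh` and `cosh` -/

lemma sinh_taylor {x : ℝ} (hx : |x| ≤ 1) : |Real.sinh x - (x + x^3/6)| ≤ |x|^5 := by
  have h1 := Real.exp_bound hx (n := 5) (by norm_num)
  have h2 := Real.exp_bound (x := -x) (by rwa [abs_neg]) (n := 5) (by norm_num)
  rw [abs_neg] at h2
  have e1 : ∑ m ∈ range 5, x ^ m / m.factorial = 1 + x + x^2/2 + x^3/6 + x^4/24 := by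
    norm_num [Finset.sum_range_succ, Nat.factorial]
  have e2 : ∑ m ∈ range 5, (-x) ^ m / m.factorial = 1 - x + x^2/2 - x^3/6 + x^4/24 := by
    norm_num [Finset.sum_range_succ, Nat.factorial]; ring
  rw [e1] at h1; rw [e2] at h2
  norm_num [Nat.factorial] at h1 h2
  have key : Real.sinh x - (x + x^3/6)
      = ((Real.exp x - (1 + x + x^2/2 + x^3/6 + x^4/24))
        - (Real.exp (-x) - (1 - x + x^2/2 - x^3/6 + x^4/24))) / 2 := by
    rw [Real.sinh_eq]; ring
  rw [key, abs_div, abs_two]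
  have habs := abs_sub (Real.exp x - (1 + x + x^2/2 + x^3/6 + x^4/24))
    (Real.exp (-x) - (1 - x + x^2/2 - x^3/6 + x^4/24))
  nlinarith [pow_nonneg (abs_nonneg x) 5]

lemma cosh_taylor {x : ℝ} (hx : |x| ≤ 1) : |Real.cosh x - (1 + x^2/2)| ≤ x^4 := by
  have h1 := Real.exp_bound hx (n := 4) (by norm_num)
  have h2 := Real.exp_bound (x := -x) (by rwa [abs_neg]) (n := 4) (by norm_num)
  rw [abs_neg] at h2
  have e1 : ∑ m ∈ range 4, x ^ m / m.factorial = 1 + x + x^2/2 + x^3/6 := by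
    norm_num [Finset.sum_range_succ, Nat.factorial]
  have e2 : ∑ m ∈ range 4, (-x) ^ m / m.factorial = 1 - x + x^2/2 - x^3/6 := by
    norm_num [Finset.sum_range_succ, Nat.factorial]; ring
  rw [e1] at h1; rw [e2] at h2
  norm_num [Nat.factorial] at h1 h2
  have key : Real.cosh x - (1 + x^2/2)
      = ((Real.exp x - (1 + x + x^2/2 + x^3/6))
        + (Real.exp (-x) - (1 - x + x^2/2 - x^3/6))) / 2 := by
    rw [Real.cosh_eq]; ring
  rw [key, abs_div, abs_two]
  have habs := abs_add_le (Real.exp x - (1 + x + x^2/2 + x^3/6))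
    (Real.exp (-x) - (1 - x + x^2/2 - x^3/6))
  have h4 : |x|^4 = x^4 := by rw [← abs_pow, abs_of_nonneg (by positivity)]
  nlinarith [pow_nonneg (abs_nonneg x) 4]

lemma sinh_lb_one {x : ℝ} (hx : 1 ≤ x) : x^3/12 ≤ Real.sinh x := by
  have h0 : (0:ℝ) ≤ x := by linarith
  have h := Real.sum_le_exp_of_nonneg h0 4
  have e1 : ∑ i ∈ range 4, x ^ i / i.factorial = 1 + x + x^2/2 + x^3/6 := by
    norm_num [Finset.sum_range_succ, Nat.factorial]
  rw [e1] at h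
  have h2 : Real.exp (-x) ≤ 1 := Real.exp_le_one_iff.2 (by linarith)
  rw [Real.sinh_eq]
  nlinarith

lemma cosh_le_two_sinh {x : ℝ} (hx : 1 ≤ x) : Real.cosh x ≤ 2 * Real.sinh x := by
  have hs : 1 ≤ Real.sinh x := by
    have := Real.self_lt_sinh_iff.mpr (show (0:ℝ) < x by linarith)
    linarith
  have h2 : Real.exp (-x) ≤ 1 := Real.exp_le_one_iff.2 (by linarith)
  rw [Real.cosh_eq, Real.sinh_eq] at *
  nlinarith

/- ### The auxiliary function `hh x = x³ csch² x − x` -/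

/-- `hh x = x³/sinh² x − x`, the nonlinear part of `x³ csch² x`. -/
noncomputable def hh (x : ℝ) : ℝ := x^3 / Real.sinh x ^ 2 - x

/-- Derivative of `hh` away from `0`. -/
noncomputable def hh' (x : ℝ) : ℝ :=
  (3*x^2 * Real.sinh x ^ 2 - x^3 * (2 * Real.sinh x * Real.cosh x)) / (Real.sinh x ^ 2) ^ 2 - 1

lemma hh_hasDerivAt {x : ℝ} (hx : x ≠ 0) : HasDerivAt hh (hh' x) x := by
  have hs : Real.sinh x ≠ 0 := Real.sinh_ne_zero.2 hx
  have h1 : HasDerivAt (fun x : ℝ => x^3) (3*x^2) x := by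
    simpa using (hasDerivAt_pow 3 x)
  have h2 : HasDerivAt (fun x : ℝ => Real.sinh x ^ 2) (2 * Real.sinh x * Real.cosh x) x := by
    have := (Real.hasDerivAt_sinh x).fun_pow 2
    simpa [mul_comm, mul_assoc, mul_left_comm] using this
  have h3 := (h1.div h2 (pow_ne_zero 2 hs)).sub (hasDerivAt_id x)
  exact h3

lemma ksym_eq (ξ₁ ξ₂ : ℝ) :
    ksym ξ₁ ξ₂ = (1/2) * (ξ₁ + ξ₂) * (hh (ξ₁ + ξ₂) - hh ξ₁ - hh ξ₂) := by
  unfold ksym csch hh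
  ring

lemma hh_odd (x : ℝ) : hh (-x) = - hh x := by
  simp only [hh, Real.sinh_neg]
  ring

lemma hh'_even (x : ℝ) : hh' (-x) = hh' x := by
  simp only [hh', Real.sinh_neg, Real.cosh_neg]
  ring

/- ### Bound on the numerator of `hh'` for small `x` -/

set_option maxHeartbeats 1000000 in
lemma N_bound {x : ℝ} (hx0 : 0 < x) (hx1 : x ≤ 1) :
    |3*x^2*Real.sinh x - 2*x^3*Real.cosh x - Real.sinh x ^ 3| ≤ 20 * x^5 := by
  have hax : |x| = x := abs_of_pos hx0
  have hr1 : |Real.sinh x - (x + x^3/6)| ≤ x^5 := by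
    have := sinh_taylor (x := x) (by rw [hax]; exact hx1); rwa [hax] at this
  have hr2 : |Real.cosh x - (1 + x^2/2)| ≤ x^4 := cosh_taylor (by rw [hax]; exact hx1)
  set r₁ := Real.sinh x - (x + x^3/6) with hr1def
  set r₂ := Real.cosh x - (1 + x^2/2) with hr2def
  have hs : Real.sinh x = x + x^3/6 + r₁ := by rw [hr1def]; ring
  have hc : Real.cosh x = 1 + x^2/2 + r₂ := by rw [hr2def]; ring
  rw [hs, hc]
  clear_value r₁ r₂
  clear hs hc hr1def hr2def
  rw [abs_le] at hr1 hr2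
  obtain ⟨hr1l, hr1u⟩ := hr1
  obtain ⟨hr2l, hr2u⟩ := hr2
  have hx5 : (0:ℝ) ≤ x^5 := by positivity
  have h75 : x^7 ≤ x^5 := pow_le_pow_of_le_one hx0.le hx1 (by norm_num)
  have h95 : x^9 ≤ x^5 := pow_le_pow_of_le_one hx0.le hx1 (by norm_num)
  have h105 : x^10 ≤ x^5 := pow_le_pow_of_le_one hx0.le hx1 (by norm_num)
  have h155 : x^15 ≤ x^5 := pow_le_pow_of_le_one hx0.le hx1 (by norm_num)
  have hid : 3*x^2*(x + x^3/6 + r₁) - 2*x^3*(1 + x^2/2 + r₂) - (x + x^3/6 + r₁)^3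
      = -x^5 + 3*(x^2*r₁) - 2*(x^3*r₂) - x^7/12 - x^9/216
        - 3*((x+x^3/6)^2*r₁) - 3*((x+x^3/6)*r₁^2) - r₁^3 := by ring
  rw [hid]
  have hx2 : (0:ℝ) ≤ x^2 := by positivity
  have hx7 : (0:ℝ) ≤ x^7 := by positivity
  have hx9 : (0:ℝ) ≤ x^9 := by positivity
  have hx3 : (0:ℝ) ≤ x^3 := by positivity
  have hA : -x^5 ≤ x^2*r₁ ∧ x^2*r₁ ≤ x^5 := by
    have h1 : x^2*r₁ ≤ x^2*x^5 := mul_le_mul_of_nonneg_left hr1u hx2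
    have h2 : x^2*(-x^5) ≤ x^2*r₁ := mul_le_mul_of_nonneg_left hr1l hx2
    have e1 : x^2*x^5 = x^7 := by ring
    have e2 : x^2*(-x^5) = -(x^7) := by ring
    rw [e1] at h1; rw [e2] at h2
    exact ⟨by linarith, by linarith⟩
  have hB : -x^5 ≤ x^3*r₂ ∧ x^3*r₂ ≤ x^5 := by
    have h1 : x^3*r₂ ≤ x^3*x^4 := mul_le_mul_of_nonneg_left hr2u hx3
    have h2 : x^3*(-x^4) ≤ x^3*r₂ := mul_le_mul_of_nonneg_left hr2l hx3
    have e1 : x^3*x^4 = x^7 := by ring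
    have e2 : x^3*(-x^4) = -(x^7) := by ring
    rw [e1] at h1; rw [e2] at h2
    exact ⟨by linarith, by linarith⟩
  have ha2 : (x+x^3/6)^2 ≤ 2 := by nlinarith
  have hE : -(2*x^5) ≤ (x+x^3/6)^2*r₁ ∧ (x+x^3/6)^2*r₁ ≤ 2*x^5 := by
    have h1 : (x+x^3/6)^2*r₁ ≤ (x+x^3/6)^2*x^5 :=
      mul_le_mul_of_nonneg_left hr1u (sq_nonneg _)
    have h2 : (x+x^3/6)^2*(-x^5) ≤ (x+x^3/6)^2*r₁ :=
      mul_le_mul_of_nonneg_left hr1l (sq_nonneg _)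
    have h3 : (x+x^3/6)^2*x^5 ≤ 2*x^5 := mul_le_mul_of_nonneg_right ha2 hx5
    have e : (x+x^3/6)^2*(-x^5) = -((x+x^3/6)^2*x^5) := by ring
    rw [e] at h2
    exact ⟨by linarith, by linarith⟩
  have ha : 0 ≤ x+x^3/6 ∧ x+x^3/6 ≤ 2 := by constructor <;> nlinarith
  have hr1sq : r₁^2 ≤ x^5 := by
    have h1 : r₁^2 ≤ (x^5)^2 := sq_le_sq' hr1l hr1u
    have e1 : (x^5)^2 = x^10 := by ring
    rw [e1] at h1; linarith
  have hF : 0 ≤ (x+x^3/6)*r₁^2 ∧ (x+x^3/6)*r₁^2 ≤ 2*x^5 := by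
    constructor
    · exact mul_nonneg ha.1 (sq_nonneg r₁)
    · have h1 : (x+x^3/6)*r₁^2 ≤ (x+x^3/6)*x^5 := mul_le_mul_of_nonneg_left hr1sq ha.1
      have h2 : (x+x^3/6)*x^5 ≤ 2*x^5 := mul_le_mul_of_nonneg_right ha.2 hx5
      linarith
  have hG : -x^5 ≤ r₁^3 ∧ r₁^3 ≤ x^5 := by
    have hru : |r₁| ≤ x^5 := abs_le.2 ⟨hr1l, hr1u⟩
    have habs : |r₁^3| ≤ x^5 := by
      rw [abs_pow]
      calc |r₁|^3 ≤ (x^5)^3 := pow_le_pow_left₀ (abs_nonneg _) hru 3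
        _ = x^15 := by ring
        _ ≤ x^5 := h155
    have := abs_le.1 habs
    exact ⟨this.1, this.2⟩
  rw [abs_le]
  constructor
  · linarith [hA.1, hA.2, hB.1, hB.2, hE.1, hE.2, hF.1, hF.2, hG.1, hG.2]
  · linarith [hA.1, hA.2, hB.1, hB.2, hE.1, hE.2, hF.1, hF.2, hG.1, hG.2]

/- ### Bound on `hh'` -/

lemma hh'_bound_pos {x : ℝ} (hx : 0 < x) : |hh' x| ≤ 52 * min (x^2) 1 := by
  have hs0 : 0 < Real.sinh x := Real.sinh_pos_iff.2 hx
  have hxs : x < Real.sinh x := Real.self_lt_sinh_iff.2 hx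
  set s := Real.sinh x with hsdef
  set c := Real.cosh x with hcdef
  rcases le_or_gt x 1 with hx1 | hx1
  · have hmin : min (x^2) 1 = x^2 := min_eq_left (by nlinarith)
    rw [hmin]
    have hEq : hh' x = (3*x^2*s - 2*x^3*c - s^3)/s^3 := by
      rw [hh']
      field_simp
      ring
    rw [hEq, abs_div, abs_of_pos (by positivity : (0:ℝ) < s^3)]
    have hN := N_bound hx hx1
    have hx3 : (0:ℝ) < x^3 := by positivity
    have hs3 : x^3 ≤ s^3 := pow_le_pow_left₀ hx.le hxs.le 3
    calc |3*x^2*s - 2*x^3*c - s^3| / s^3 ≤ (20*x^5) / x^3 := by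
          apply div_le_div₀ (by positivity) hN hx3 hs3
      _ = 20 * x^2 := by field_simp
      _ ≤ 52 * x^2 := by nlinarith
  · have hmin : min (x^2) 1 = 1 := min_eq_right (by nlinarith)
    rw [hmin, mul_one]
    have hEq : hh' x = (3*x^2*s^2 - 2*x^3*s*c - s^4)/s^4 := by
      rw [hh']
      field_simp
      ring
    rw [hEq, abs_div, abs_of_pos (by positivity : (0:ℝ) < s^4)]
    rw [div_le_iff₀ (by positivity : (0:ℝ) < s^4)]
    have hc2s : c ≤ 2*s := cosh_le_two_sinh hx1.le
    have hc0 : 0 < c := Real.cosh_pos x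
    have hxle : x ≤ s := hxs.le
    have h1 : x^2*s^2 ≤ s^2*s^2 :=
      mul_le_mul_of_nonneg_right (by nlinarith) (sq_nonneg s)
    have hlb : x^3/12 ≤ s := sinh_lb_one hx1.le
    have h3 : x^3 ≤ 12*s^2 := by nlinarith
    have h4 : x^3*s*c ≤ 2*(x^3*s*s) := by
      nlinarith [mul_pos (mul_pos (by positivity : (0:ℝ) < x^3) hs0) hc0]
    have h5 : x^3*s*s ≤ 12*s^2*s^2 := by nlinarith [sq_nonneg s]
    have h6 : 0 ≤ x^3*s*c := by positivity
    rw [abs_le]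
    constructor <;> nlinarith [sq_nonneg s, sq_nonneg x]

lemma hh'_bound {x : ℝ} (hx : x ≠ 0) : |hh' x| ≤ 52 * min (x^2) 1 := by
  rcases hx.lt_or_gt with h | h
  · have := hh'_bound_pos (x := -x) (by linarith)
    rw [hh'_even] at this
    norm_num at this
    exact this
  · exact hh'_bound_pos h

/- ### Mean value estimate for `hh` -/

lemma hh_lip_aux {a b M : ℝ} (hab : a < b) (hne : ∀ θ ∈ Set.Icc a b, θ ≠ 0)
    (hM : ∀ θ ∈ Set.Icc a b, min (θ^2) 1 ≤ M) :
    |hh b - hh a| ≤ 52 * M * |b - a| := by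
  have hcont : ContinuousOn hh (Set.Icc a b) := fun θ hθ =>
    ((hh_hasDerivAt (hne θ hθ)).continuousAt).continuousWithinAt
  obtain ⟨c, hc, hcd⟩ := exists_hasDerivAt_eq_slope hh hh' hab hcont
    (fun θ hθ => hh_hasDerivAt (hne θ (Set.mem_Icc_of_Ioo hθ)))
  have hc' : c ∈ Set.Icc a b := Set.mem_Icc_of_Ioo hc
  have h1 : hh b - hh a = hh' c * (b - a) := by
    rw [hcd, div_mul_cancel₀]
    exact sub_ne_zero.2 hab.ne'
  rw [h1, abs_mul]
  have h2 : |hh' c| ≤ 52 * M := le_trans (hh'_bound (hne c hc'))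
    (by have := hM c hc'; nlinarith)
  have h3 : 0 ≤ |b - a| := abs_nonneg _
  exact mul_le_mul_of_nonneg_right h2 h3

lemma hh_lip {a b M : ℝ} (hne : ∀ θ ∈ Set.uIcc a b, θ ≠ 0)
    (hM : ∀ θ ∈ Set.uIcc a b, min (θ^2) 1 ≤ M) :
    |hh b - hh a| ≤ 52 * M * |b - a| := by
  rcases lt_trichotomy a b with h | h | h
  · rw [Set.uIcc_of_le h.le] at hne hM
    exact hh_lip_aux h hne hM
  · subst h; simp
  · rw [Set.uIcc_comm, Set.uIcc_of_le h.le] at hne hM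
    have := hh_lip_aux h hne hM
    rwa [abs_sub_comm (hh a) (hh b), abs_sub_comm a b] at this

/- ### Pointwise bound on `hh` -/

lemma hh_abs_pos {x : ℝ} (hx : 0 < x) : |hh x| ≤ 3 * x * min (x^2) 1 := by
  have hs0 : 0 < Real.sinh x := Real.sinh_pos_iff.2 hx
  have hxs : x < Real.sinh x := Real.self_lt_sinh_iff.2 hx
  set s := Real.sinh x with hsdef
  have hval : hh x = -((x*s^2 - x^3)/s^2) := by
    rw [hh]; field_simp; ring
  have hnum : 0 ≤ x*s^2 - x^3 := by
    have e0 : 0 ≤ (s-x)*(s+x) := mul_nonneg (by linarith) (by linarith)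
    nlinarith [mul_nonneg hx.le e0]
  rw [hval, abs_neg, abs_of_nonneg (div_nonneg hnum (by positivity))]
  rcases le_or_gt x 1 with hx1 | hx1
  · rw [min_eq_left (by nlinarith)]
    have hT : Real.sinh x - (x + x^3/6) ≤ x^5 := by
      have := sinh_taylor (x := x) (by rw [abs_of_pos hx]; exact hx1)
      rw [abs_of_pos hx] at this
      exact (abs_le.1 this).2
    have hsx : s ≤ x + (7/6)*x^3 := by
      have h5 : x^5 ≤ x^3 := pow_le_pow_of_le_one hx.le hx1 (by norm_num)
      simp only [hsdef]; linarith
    have key : x*s^2 - x^3 ≤ (7/3)*x^4*s := by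
      have e1 : (s-x)*(s+x) ≤ (7/6*x^3)*(2*s) :=
        mul_le_mul (by linarith) (by linarith) (by linarith) (by positivity)
      nlinarith [mul_le_mul_of_nonneg_left e1 hx.le]
    calc (x*s^2 - x^3)/s^2 ≤ ((7/3)*x^4*s)/s^2 := by gcongr
      _ = (7/3)*x^4/s := by field_simp
      _ ≤ (7/3)*x^4/x := by gcongr <;> positivity
      _ = (7/3)*x^3 := by field_simp
      _ ≤ 3*x*x^2 := by nlinarith
  · rw [min_eq_right (by nlinarith)]
    calc (x*s^2 - x^3)/s^2 ≤ (x*s^2)/s^2 := by gcongr; nlinarith [pow_pos hx 3]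
      _ = x := by field_simp
      _ ≤ 3*x*1 := by nlinarith

lemma hh_abs {x : ℝ} : |hh x| ≤ 3 * |x| * min (x^2) 1 := by
  rcases lt_trichotomy x 0 with h | h | h
  · have := hh_abs_pos (x := -x) (by linarith)
    rw [hh_odd, abs_neg] at this
    rw [abs_of_neg h]
    calc |hh x| ≤ 3 * (-x) * min ((-x)^2) 1 := this
      _ = 3 * (-x) * min (x^2) 1 := by rw [neg_pow]; norm_num
  · subst h; simp [hh]
  · have := hh_abs_pos h
    rwa [abs_of_pos h]

/- ### Interval helpers -/

lemma sq_le_of_uIcc {a b θ : ℝ} (h : θ ∈ Set.uIcc a b) : θ^2 ≤ max (a^2) (b^2) := by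
  rcases Set.mem_uIcc.1 h with ⟨h1, h2⟩ | ⟨h1, h2⟩ <;> rcases le_total 0 θ with h3 | h3
  · exact le_trans (by nlinarith) (le_max_right (a^2) (b^2))
  · exact le_trans (by nlinarith) (le_max_left (a^2) (b^2))
  · exact le_trans (by nlinarith) (le_max_left (a^2) (b^2))
  · exact le_trans (by nlinarith) (le_max_right (a^2) (b^2))

lemma uIcc_ne_zero {a b : ℝ} (h : 0 < a * b) : ∀ θ ∈ Set.uIcc a b, θ ≠ 0 := by
  intro θ hθ
  rcases Set.mem_uIcc.1 hθ with ⟨h1, h2⟩ | ⟨h1, h2⟩ <;>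
    rcases mul_pos_iff.1 h with ⟨ha, hb⟩ | ⟨ha, hb⟩ <;> intro h0 <;> subst h0 <;> linarith

lemma min_sq_le {θ c : ℝ} (h : θ^2 ≤ (9/4)*c^2) : min (θ^2) 1 ≤ (9/4) * min (c^2) 1 := by
  rcases le_total (c^2) 1 with hc | hc
  · rw [min_eq_left hc]
    exact le_trans (min_le_left _ _) h
  · rw [min_eq_right hc]
    have := min_le_right (θ^2) 1
    linarith

lemma min_mul_le {c : ℝ} : min (c^2) 1 * (1 + c^2) ≤ 2 * c^2 := by
  rcases le_total (c^2) 1 with hc | hc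
  · rw [min_eq_left hc]; nlinarith [sq_nonneg c]
  · rw [min_eq_right hc]; nlinarith [sq_nonneg c]

lemma jb_sq (ξ : ℝ) : jb ξ ^ 2 = 1 + ξ^2 :=
  Real.sq_sqrt (by positivity)

/- ### Main theorem -/

set_option maxHeartbeats 2000000 in
theorem ksym_upper_bounds :
    ∃ C : ℝ, 0 < C ∧ ∃ ε : ℝ, 0 < ε ∧ ε < 1 ∧
      (∀ ξ₁ ξ₂ : ℝ, ξ₁ ≠ 0 → |ξ₁| ≤ ε * |ξ₂| →
        |ksym ξ₁ ξ₂| ≤ C * |ξ₁| * |ξ₂| ^ 3 / jb ξ₂ ^ 2) ∧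
      (∀ ξ₁ ξ₂ : ℝ, ξ₁ ≠ 0 → ξ₂ ≠ 0 → ξ₁ + ξ₂ ≠ 0 → |ξ₁ + ξ₂| ≤ ε * |ξ₂| →
        |ksym ξ₁ ξ₂| ≤ C * (ξ₁ + ξ₂) ^ 2 * ξ₂ ^ 2 / jb ξ₂ ^ 2) := by
  refine ⟨200, by norm_num, 1/2, by norm_num, by norm_num, ?_, ?_⟩
  · -- low-high regime
    intro ξ₁ ξ₂ h1 hle
    have ha1 : 0 < |ξ₁| := abs_pos.2 h1
    have ha2 : 0 < |ξ₂| := by nlinarith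
    have hm0 : 0 ≤ min (ξ₂^2) 1 := le_min (sq_nonneg _) zero_le_one
    obtain ⟨σ, hσdef⟩ : ∃ σ : ℝ, σ = ξ₁ + ξ₂ := ⟨_, rfl⟩
    have habs_s : |σ| ≤ (3/2) * |ξ₂| := by
      rw [hσdef]
      calc |ξ₁ + ξ₂| ≤ |ξ₁| + |ξ₂| := abs_add_le _ _
        _ ≤ (3/2) * |ξ₂| := by linarith
    have hσ2 : σ^2 ≤ (9/4) * ξ₂^2 := by
      nlinarith [mul_self_le_mul_self (abs_nonneg σ) habs_s, sq_abs σ, sq_abs ξ₂,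
        abs_nonneg ξ₂]
    have hsign : 0 < ξ₂ * σ := by
      have h3 : -(1/2 * (|ξ₂| * |ξ₂|)) ≤ ξ₁ * ξ₂ := by
        have h2 : |ξ₁ * ξ₂| ≤ (1/2) * (|ξ₂| * |ξ₂|) := by
          rw [abs_mul]; nlinarith
        have := neg_abs_le (ξ₁ * ξ₂); linarith
      have h4 : |ξ₂| * |ξ₂| = ξ₂ * ξ₂ := by rw [← abs_mul, abs_mul_self]
      have h5 : 0 < ξ₂ * ξ₂ := by nlinarith
      have hσe : ξ₂ * σ = ξ₁ * ξ₂ + ξ₂ * ξ₂ := by rw [hσdef]; ring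
      rw [hσe]; rw [h4] at h3; linarith
    have hlip : |hh σ - hh ξ₂| ≤ 52 * ((9/4) * min (ξ₂^2) 1) * |σ - ξ₂| := by
      apply hh_lip (uIcc_ne_zero hsign)
      intro θ hθ
      apply min_sq_le
      have hθ2 := sq_le_of_uIcc hθ
      rcases max_cases (ξ₂^2) (σ^2) with ⟨he, _⟩ | ⟨he, _⟩ <;> rw [he] at hθ2 <;> nlinarith
    have hσξ : |σ - ξ₂| = |ξ₁| := by rw [hσdef]; congr 1; ring
    rw [hσξ] at hlip
    have hmin1 : min (ξ₁^2) 1 ≤ min (ξ₂^2) 1 := by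
      apply min_le_min _ le_rfl
      nlinarith [sq_abs ξ₁, sq_abs ξ₂]
    have habs1 : |hh ξ₁| ≤ 3 * |ξ₁| * min (ξ₂^2) 1 := by
      refine le_trans hh_abs ?_
      nlinarith [abs_nonneg ξ₁, le_min (sq_nonneg ξ₁) (zero_le_one (α := ℝ))]
    have hexpr : |hh σ - hh ξ₁ - hh ξ₂| ≤ 120 * |ξ₁| * min (ξ₂^2) 1 := by
      calc |hh σ - hh ξ₁ - hh ξ₂| = |(hh σ - hh ξ₂) - hh ξ₁| := by ring_nf
        _ ≤ |hh σ - hh ξ₂| + |hh ξ₁| := abs_sub _ _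
        _ ≤ 120 * |ξ₁| * min (ξ₂^2) 1 := by nlinarith
    have hk : |ksym ξ₁ ξ₂| ≤ 90 * |ξ₁| * |ξ₂| * min (ξ₂^2) 1 := by
      rw [ksym_eq, ← hσdef, abs_mul, abs_mul]
      have e1 : |((1:ℝ)/2)| = 1/2 := by norm_num
      rw [e1]
      calc 1/2 * |σ| * |hh σ - hh ξ₁ - hh ξ₂|
          ≤ 1/2 * ((3/2) * |ξ₂|) * (120 * |ξ₁| * min (ξ₂^2) 1) := by
            apply mul_le_mul _ hexpr (abs_nonneg _) (by positivity)
            apply mul_le_mul_of_nonneg_left habs_s (by norm_num)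
        _ = 90 * |ξ₁| * |ξ₂| * min (ξ₂^2) 1 := by ring
    rw [jb_sq, le_div_iff₀ (by positivity : (0:ℝ) < 1 + ξ₂^2)]
    have hmm : min (ξ₂^2) 1 * (1 + ξ₂^2) ≤ 2 * ξ₂^2 := min_mul_le
    have habs3 : |ξ₂|^3 = |ξ₂| * ξ₂^2 := by rw [pow_succ, sq_abs]; ring
    have hkk := mul_le_mul_of_nonneg_right hk (by positivity : (0:ℝ) ≤ 1 + ξ₂^2)
    calc |ksym ξ₁ ξ₂| * (1 + ξ₂^2)
        ≤ (90 * |ξ₁| * |ξ₂|) * (min (ξ₂^2) 1 * (1 + ξ₂^2)) := by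
          calc |ksym ξ₁ ξ₂| * (1 + ξ₂^2)
              ≤ 90 * |ξ₁| * |ξ₂| * min (ξ₂^2) 1 * (1 + ξ₂^2) := hkk
            _ = (90 * |ξ₁| * |ξ₂|) * (min (ξ₂^2) 1 * (1 + ξ₂^2)) := by ring
      _ ≤ (90 * |ξ₁| * |ξ₂|) * (2 * ξ₂^2) := by
          apply mul_le_mul_of_nonneg_left hmm (by positivity)
      _ ≤ 200 * |ξ₁| * |ξ₂|^3 := by
          rw [habs3]
          nlinarith [mul_nonneg (mul_nonneg (abs_nonneg ξ₁) (abs_nonneg ξ₂)) (sq_nonneg ξ₂)]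
  · -- high-high regime
    intro ξ₁ ξ₂ h1 h2 h12 hle
    have ha2 : 0 < |ξ₂| := abs_pos.2 h2
    have hm0 : 0 ≤ min (ξ₂^2) 1 := le_min (sq_nonneg _) zero_le_one
    obtain ⟨σ, hσdef⟩ : ∃ σ : ℝ, σ = ξ₁ + ξ₂ := ⟨_, rfl⟩
    rw [← hσdef] at hle
    have haσ : 0 ≤ |σ| := abs_nonneg _
    have hminσ : min (σ^2) 1 ≤ min (ξ₂^2) 1 := by
      apply min_le_min _ le_rfl
      nlinarith [sq_abs σ, sq_abs ξ₂]
    have habsσ : |hh σ| ≤ 3 * |σ| * min (ξ₂^2) 1 := by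
      refine le_trans hh_abs ?_
      nlinarith [le_min (sq_nonneg σ) (zero_le_one (α := ℝ))]
    have hsign : 0 < ξ₂ * (ξ₂ - σ) := by
      have h3 : -((1/2) * (|ξ₂| * |ξ₂|)) ≤ -(σ * ξ₂) := by
        have h4 : |σ * ξ₂| ≤ (1/2) * (|ξ₂| * |ξ₂|) := by
          rw [abs_mul]; nlinarith
        have := le_abs_self (σ * ξ₂); linarith
      have h4 : |ξ₂| * |ξ₂| = ξ₂ * ξ₂ := by rw [← abs_mul, abs_mul_self]
      have h5 : 0 < ξ₂ * ξ₂ := by nlinarith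
      have he : ξ₂ * (ξ₂ - σ) = ξ₂ * ξ₂ + -(σ * ξ₂) := by ring
      rw [he]; rw [h4] at h3; linarith
    have hd2 : (ξ₂ - σ)^2 ≤ (9/4) * ξ₂^2 := by
      have e1 : |ξ₂ - σ| ≤ (3/2) * |ξ₂| := by
        calc |ξ₂ - σ| ≤ |ξ₂| + |σ| := abs_sub _ _
          _ ≤ (3/2) * |ξ₂| := by linarith
      nlinarith [mul_self_le_mul_self (abs_nonneg (ξ₂ - σ)) e1, sq_abs (ξ₂ - σ), sq_abs ξ₂,
        abs_nonneg ξ₂]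
    have hlip : |hh (ξ₂ - σ) - hh ξ₂| ≤ 52 * ((9/4) * min (ξ₂^2) 1) * |(ξ₂ - σ) - ξ₂| := by
      apply hh_lip (uIcc_ne_zero hsign)
      intro θ hθ
      apply min_sq_le
      have hθ2 := sq_le_of_uIcc hθ
      rcases max_cases (ξ₂^2) ((ξ₂ - σ)^2) with ⟨he, _⟩ | ⟨he, _⟩ <;> rw [he] at hθ2 <;> nlinarith
    have hd : |(ξ₂ - σ) - ξ₂| = |σ| := by rw [show (ξ₂ - σ) - ξ₂ = -σ by ring, abs_neg]
    rw [hd] at hlip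
    have hneg : hh (ξ₂ - σ) = - hh ξ₁ := by
      rw [show ξ₂ - σ = -ξ₁ by rw [hσdef]; ring, hh_odd]
    have hexpr : |hh σ - hh ξ₁ - hh ξ₂| ≤ 120 * |σ| * min (ξ₂^2) 1 := by
      have e : hh σ - hh ξ₁ - hh ξ₂ = hh σ + (hh (ξ₂ - σ) - hh ξ₂) := by
        rw [hneg]; ring
      rw [e]
      calc |hh σ + (hh (ξ₂ - σ) - hh ξ₂)| ≤ |hh σ| + |hh (ξ₂ - σ) - hh ξ₂| := abs_add_le _ _
        _ ≤ 120 * |σ| * min (ξ₂^2) 1 := by nlinarith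
    have hk : |ksym ξ₁ ξ₂| ≤ 60 * σ^2 * min (ξ₂^2) 1 := by
      rw [ksym_eq, ← hσdef, abs_mul, abs_mul]
      have e1 : |((1:ℝ)/2)| = 1/2 := by norm_num
      rw [e1]
      have e2 : |σ| * |σ| = σ^2 := by rw [← abs_mul, abs_mul_self]; ring
      calc 1/2 * |σ| * |hh σ - hh ξ₁ - hh ξ₂| ≤ 1/2 * |σ| * (120 * |σ| * min (ξ₂^2) 1) := by
            apply mul_le_mul_of_nonneg_left hexpr (by positivity)
        _ = 60 * (|σ| * |σ|) * min (ξ₂^2) 1 := by ring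
        _ = 60 * σ^2 * min (ξ₂^2) 1 := by rw [e2]
    rw [← hσdef, jb_sq, le_div_iff₀ (by positivity : (0:ℝ) < 1 + ξ₂^2)]
    have hmm : min (ξ₂^2) 1 * (1 + ξ₂^2) ≤ 2 * ξ₂^2 := min_mul_le
    have hkk := mul_le_mul_of_nonneg_right hk (by positivity : (0:ℝ) ≤ 1 + ξ₂^2)
    calc |ksym ξ₁ ξ₂| * (1 + ξ₂^2)
        ≤ (60 * σ^2) * (min (ξ₂^2) 1 * (1 + ξ₂^2)) := by
          calc |ksym ξ₁ ξ₂| * (1 + ξ₂^2)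
              ≤ 60 * σ^2 * min (ξ₂^2) 1 * (1 + ξ₂^2) := hkk
            _ = (60 * σ^2) * (min (ξ₂^2) 1 * (1 + ξ₂^2)) := by ring
      _ ≤ (60 * σ^2) * (2 * ξ₂^2) := by
          apply mul_le_mul_of_nonneg_left hmm (by positivity)
      _ ≤ 200 * σ^2 * ξ₂^2 := by
          nlinarith [mul_nonneg (sq_nonneg σ) (sq_nonneg ξ₂)]
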